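/- arXiv:2501.13016 — 2 statements merged into one kernel-verified Lean document; each statement's English description precedes it below -/
import Mathlib

section
/- Let q ∈ (0,1], let n ≥ 1 and let i, j, k be nonnegative integers with i + j + k = n. Then the triangular q-Bernstein polynomials satisfy the recurrence B^n_{ijk}(u,v) = q^k u·B^{n-1}_{i-1,j,k}(u,v) + q^k v·B^{n-1}_{i,j-1,k}(u,v) + (1 − q^{k−1}u − q^{k−1}v)·B^{n-1}_{i,j,k-1}(u,v) for all real u, v, where by convention B^0_{000}(u,v) = 1 and B^m_{ijk}(u,v) = 0 whenever any of the indices i, j, k is negative. -/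
open Finset

/-- The q-integer [r] = 1 + q + ... + q^(r-1). -/
noncomputable def qInt (q : ℝ) (r : ℕ) : ℝ := ∑ s ∈ Finset.range r, q ^ s

/-- The q-factorial [r]!. -/
noncomputable def qFact (q : ℝ) : ℕ → ℝ
  | 0 => 1
  | r + 1 => qInt q (r + 1) * qFact q r

/-- The q-binomial coefficient [i choose j]_q (zero unless i ≥ j ≥ 0). -/
noncomputable def qBinom (q : ℝ) (i j : ℕ) : ℝ :=
  if j ≤ i then qFact q i / (qFact q j * qFact q (i - j)) else 0

/-- The q-binomial coefficient with integer indices, zero unless i ≥ j ≥ 0. -/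
noncomputable def qBinomZ (q : ℝ) (i j : ℤ) : ℝ :=
  if 0 ≤ j ∧ j ≤ i then qFact q i.toNat / (qFact q j.toNat * qFact q (i - j).toNat) else 0

/-- The triangular q-Bernstein polynomial B^n_{ijk}(u,v)
    (meaningful for i + j + k = n). -/
noncomputable def triB (q : ℝ) (n i j k : ℕ) (u v : ℝ) : ℝ :=
  qBinom q n k * (Nat.choose (i + j) i : ℝ) * u ^ i * v ^ j *
    ∏ s ∈ Finset.range k, (1 - q ^ s * u - q ^ s * v)

/-- The triangular q-Bernstein polynomial with integer indices; by convention it is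
    zero whenever any of the indices is negative. -/
noncomputable def triBZ (q : ℝ) (n : ℕ) (i j k : ℤ) (u v : ℝ) : ℝ :=
  if 0 ≤ i ∧ 0 ≤ j ∧ 0 ≤ k then triB q n i.toNat j.toNat k.toNat u v else 0

/-- The classical triangular Bernstein polynomial b^n_{ijk}(u,v). -/
noncomputable def triBern (n i j k : ℕ) (u v : ℝ) : ℝ :=
  (Nat.factorial n : ℝ) /
      ((Nat.factorial i : ℝ) * (Nat.factorial j : ℝ) * (Nat.factorial k : ℝ)) *
    u ^ i * v ^ j * (1 - u - v) ^ k

/-- The set of triples (i, j, k) of nonnegative integers with i + j + k = n. -/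
def simplex (n : ℕ) : Finset (ℕ × ℕ × ℕ) :=
  (Finset.range (n + 1) ×ˢ Finset.range (n + 1) ×ˢ Finset.range (n + 1)).filter
    (fun p => p.1 + p.2.1 + p.2.2 = n)

/-!
Write `B^n_{ijk} = [n choose k]_q · S_{ijk}`, where
`S_{ijk} = C(i+j, i) u^i v^j ∏_{s<k} (1 - q^s u - q^s v)` does not depend on `n`.
Pascal's rule for `C(i+j, i)` gives `u S_{i-1,j,k} + v S_{i,j-1,k} = S_{ijk}`, and
`(1 - q^{k-1} u - q^{k-1} v) S_{i,j,k-1} = S_{ijk}` since this is the last factor of the product.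
The right-hand side is therefore `(q^k [n-1 choose k]_q + [n-1 choose k-1]_q) S_{ijk}`,
which is `B^n_{ijk}` by the q-Pascal rule.
-/

lemma qInt_pos {q : ℝ} (hq : 0 ≤ q) {r : ℕ} (hr : 0 < r) : 0 < qInt q r :=
  Finset.sum_pos' (fun s _ => pow_nonneg hq s) ⟨0, Finset.mem_range.2 hr, by simp⟩

lemma qFact_pos {q : ℝ} (hq : 0 ≤ q) (r : ℕ) : 0 < qFact q r := by
  induction r with
  | zero => simp [qFact]
  | succ r ih => exact mul_pos (qInt_pos hq r.succ_pos) ih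

lemma qInt_add (q : ℝ) (a b : ℕ) : qInt q (a + b) = qInt q a + q ^ a * qInt q b := by
  simp only [qInt, Finset.sum_range_add, pow_add, Finset.mul_sum]

lemma qBinom_add_left (q : ℝ) (a b : ℕ) :
    qBinom q (a + b) a = qFact q (a + b) / (qFact q a * qFact q b) := by
  rw [qBinom, if_pos (Nat.le_add_right a b), Nat.add_sub_cancel_left]

lemma qBinom_eq_zero_of_lt {q : ℝ} {n k : ℕ} (h : n < k) : qBinom q n k = 0 :=
  if_neg h.not_ge

lemma qBinom_zero_right {q : ℝ} (hq : 0 ≤ q) (n : ℕ) : qBinom q n 0 = 1 := by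
  rw [qBinom, if_pos n.zero_le, Nat.sub_zero, qFact.eq_1, one_mul, div_self (qFact_pos hq n).ne']

lemma qBinom_self {q : ℝ} (hq : 0 ≤ q) (n : ℕ) : qBinom q n n = 1 := by
  rw [qBinom, if_pos le_rfl, Nat.sub_self, qFact.eq_1, mul_one, div_self (qFact_pos hq n).ne']

lemma qBinom_succ_succ {q : ℝ} (hq : 0 ≤ q) (m l : ℕ) :
    qBinom q (m + 1) (l + 1) = q ^ (l + 1) * qBinom q m (l + 1) + qBinom q m l := by
  rcases lt_trichotomy l m with hlm | rfl | hml
  · obtain ⟨d, rfl⟩ : ∃ d, m = l + 1 + d := ⟨m - (l + 1), by omega⟩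
    -- `[l+d+2] = [l+1] + q^(l+1) [d+1]` splits the top factorial of the left-hand side
    have hsplit := qInt_add q (l + 1) (d + 1)
    have htop : qFact q (l + 1 + (d + 1)) = qInt q (l + 1 + (d + 1)) * qFact q (l + (d + 1)) := by
      rw [show l + 1 + (d + 1) = l + (d + 1) + 1 by ring, qFact.eq_2]
    rw [show l + 1 + d + 1 = l + 1 + (d + 1) by ring, qBinom_add_left, qBinom_add_left,
      show l + 1 + d = l + (d + 1) by ring, qBinom_add_left, htop, hsplit, qFact.eq_2 q l,
      qFact.eq_2 q d]
    have := (qInt_pos hq l.succ_pos).ne'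
    have := (qInt_pos hq d.succ_pos).ne'
    have := (qFact_pos hq l).ne'
    have := (qFact_pos hq d).ne'
    field_simp
    ring
  · rw [qBinom_self hq, qBinom_self hq, qBinom_eq_zero_of_lt (Nat.lt_succ_self l)]
    ring
  · rw [qBinom_eq_zero_of_lt (by omega), qBinom_eq_zero_of_lt (by omega),
      qBinom_eq_zero_of_lt hml]
    ring

noncomputable def triBCore (q : ℝ) (i j k : ℕ) (u v : ℝ) : ℝ :=
  (Nat.choose (i + j) i : ℝ) * u ^ i * v ^ j *
    ∏ s ∈ Finset.range k, (1 - q ^ s * u - q ^ s * v)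

lemma triB_eq_qBinom_mul_triBCore (q : ℝ) (n i j k : ℕ) (u v : ℝ) :
    triB q n i j k u v = qBinom q n k * triBCore q i j k u v := by
  simp only [triB, triBCore]
  ring

section triBCore

variable (q : ℝ) (u v : ℝ)

lemma triBCore_succ_succ (a b k : ℕ) :
    triBCore q (a + 1) (b + 1) k u v =
      u * triBCore q a (b + 1) k u v + v * triBCore q (a + 1) b k u v := by
  simp only [triBCore, show a + 1 + (b + 1) = a + (b + 1) + 1 by ring, Nat.choose_succ_succ',
    show a + (b + 1) = a + 1 + b by ring]
  push_cast
  ring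

lemma triBCore_zero_succ (b k : ℕ) : triBCore q 0 (b + 1) k u v = v * triBCore q 0 b k u v := by
  simp only [triBCore, zero_add, Nat.choose_zero_right]
  ring

lemma triBCore_succ_zero (a k : ℕ) : triBCore q (a + 1) 0 k u v = u * triBCore q a 0 k u v := by
  simp only [triBCore, add_zero, Nat.choose_self]
  ring

lemma triBCore_succ_last (i j k : ℕ) :
    triBCore q i j (k + 1) u v = (1 - q ^ k * u - q ^ k * v) * triBCore q i j k u v := by
  simp only [triBCore, Finset.prod_range_succ]
  ring

end triBCore

lemma mul_triBZ_pred_left_add_mul_triBZ_pred_mid (q : ℝ) {m i j k : ℕ} (h : i + j + k = m + 1)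
    (u v : ℝ) :
    u * triBZ q m ((i : ℤ) - 1) j k u v + v * triBZ q m i ((j : ℤ) - 1) k u v =
      qBinom q m k * triBCore q i j k u v := by
  rcases i with _ | a <;> rcases j with _ | b
  · rw [qBinom_eq_zero_of_lt (by omega)]
    simp [triBZ]
  · simp [triBZ, triB_eq_qBinom_mul_triBCore, triBCore_zero_succ, mul_left_comm]
  · simp [triBZ, triB_eq_qBinom_mul_triBCore, triBCore_succ_zero, mul_left_comm]
  · simp [triBZ, triB_eq_qBinom_mul_triBCore, triBCore_succ_succ, add_nonneg, mul_add,
      mul_left_comm]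

lemma qBinomZ_natCast (q : ℝ) (i j : ℕ) : qBinomZ q i j = qBinom q i j := by
  simp [qBinomZ, qBinom]

lemma qBinom_succ_eq_add_qBinomZ {q : ℝ} (hq : 0 ≤ q) (m k : ℕ) :
    qBinom q (m + 1) k = q ^ k * qBinom q m k + qBinomZ q m ((k : ℤ) - 1) := by
  rcases k with _ | l
  · simp [qBinom_zero_right hq, qBinomZ]
  · simp [qBinomZ_natCast, qBinom_succ_succ hq]

lemma mul_triBZ_pred_right (q : ℝ) (m i j k : ℕ) (u v : ℝ) :
    (1 - q ^ ((k : ℤ) - 1) * u - q ^ ((k : ℤ) - 1) * v) * triBZ q m i j ((k : ℤ) - 1) u v =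
      qBinomZ q m ((k : ℤ) - 1) * triBCore q i j k u v := by
  rcases k with _ | l
  · simp [triBZ, qBinomZ]
  · simp [triBZ, qBinomZ_natCast, triB_eq_qBinom_mul_triBCore, triBCore_succ_last, mul_left_comm]

theorem stmt1_general (q : ℝ) (hq0 : 0 < q) (n : ℕ) (hn : 1 ≤ n)
    (i j k : ℕ) (hijk : i + j + k = n) (u v : ℝ) :
    triB q n i j k u v =
      q ^ k * u * triBZ q (n - 1) ((i : ℤ) - 1) (j : ℤ) (k : ℤ) u v +
      q ^ k * v * triBZ q (n - 1) (i : ℤ) ((j : ℤ) - 1) (k : ℤ) u v +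
      (1 - q ^ ((k : ℤ) - 1) * u - q ^ ((k : ℤ) - 1) * v) *
        triBZ q (n - 1) (i : ℤ) (j : ℤ) ((k : ℤ) - 1) u v := by
  obtain ⟨m, rfl⟩ : ∃ m, n = m + 1 := ⟨n - 1, by omega⟩
  have huv := mul_triBZ_pred_left_add_mul_triBZ_pred_mid q hijk u v
  have hk := mul_triBZ_pred_right q m i j k u v
  rw [Nat.add_sub_cancel, triB_eq_qBinom_mul_triBCore, qBinom_succ_eq_add_qBinomZ hq0.le]
  linear_combination (-q ^ k) * huv - hk

/-- second recurrence for the triangular q-Bernstein polynomials. -/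
theorem stmt1 (q : ℝ) (hq0 : 0 < q) (hq1 : q ≤ 1) (n : ℕ) (hn : 1 ≤ n)
    (i j k : ℕ) (hijk : i + j + k = n) (u v : ℝ) :
    triB q n i j k u v =
      q ^ k * u * triBZ q (n - 1) ((i : ℤ) - 1) (j : ℤ) (k : ℤ) u v +
      q ^ k * v * triBZ q (n - 1) (i : ℤ) ((j : ℤ) - 1) (k : ℤ) u v +
      (1 - q ^ ((k : ℤ) - 1) * u - q ^ ((k : ℤ) - 1) * v) *
        triBZ q (n - 1) (i : ℤ) (j : ℤ) ((k : ℤ) - 1) u v :=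
  stmt1_general q hq0 n hn i j k hijk u v
end

section
/- Let 0 < q < 1 and let n be a nonnegative integer. Suppose a bivariate real polynomial f satisfies f(u,v) = Σ_{i+j+k=n} c_{ijk} B^n_{ijk}(u,v) = Σ_{i+j+k=n} d_{ijk} b^n_{ijk}(u,v) for all real u, v, where c_{ijk}, d_{ijk} are real coefficients. Then for all real u, v with u ≥ 0, v ≥ 0 and u + v ≤ 1: Σ_{i+j+k=n} |d_{ijk}| · b^n_{ijk}(u,v) ≤ Σ_{i+j+k=n} |c_{ijk}| · B^n_{ijk}(u,v). (This expresses that the classical triangular Bernstein basis is better conditioned than the triangular q-Bernstein basis: cond(b; f, (u,v)) ≤ cond(B; f, (u,v)), where cond(w; f, x) = (Σ_i |γ_i w_i(x)|)/‖f‖_∞ for f = Σ_i γ_i w_i.) -/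
open Finset

/-!
Each factor `1 - q^s u - q^s v = (1 - q^s) u + (1 - q^s) v + (1 - u - v)` of a triangular
q-Bernstein polynomial is a nonnegative combination of the barycentric coordinates `u`, `v`,
`1 - u - v`, so for `0 ≤ q ≤ 1` every `B^n_{ijk}` is a nonnegative combination
`∑ a_{ijk,r} b^n_r` of the classical Bernstein polynomials of degree `n`. By linear independence
of the `b^n_r`, the two representations of `f` force `d_r = ∑ c_p a_{p,r}`, and the triangle
inequality together with `a ≥ 0` and `b^n_r ≥ 0` on the triangle gives the bound.
-/

open scoped NNReal Nat

def baryMonomial (r : ℕ × ℕ × ℕ) : ℝ → ℝ → ℝ :=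
  fun u v => u ^ r.1 * v ^ r.2.1 * (1 - u - v) ^ r.2.2

noncomputable def trinomialCoeff (n : ℕ) (r : ℕ × ℕ × ℕ) : ℝ :=
  (n ! : ℝ) / ((r.1 ! : ℝ) * (r.2.1 ! : ℝ) * (r.2.2 ! : ℝ))

noncomputable def bernsteinCone (n : ℕ) : Submodule ℝ≥0 (ℝ → ℝ → ℝ) :=
  Submodule.span ℝ≥0 (baryMonomial '' simplex n)

lemma mem_simplex {n : ℕ} {r : ℕ × ℕ × ℕ} : r ∈ simplex n ↔ r.1 + r.2.1 + r.2.2 = n := by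
  simp only [simplex, mem_filter, mem_product, mem_range]
  omega

lemma add_mem_simplex {m l : ℕ} {r s : ℕ × ℕ × ℕ} (hr : r ∈ simplex m) (hs : s ∈ simplex l) :
    r + s ∈ simplex (m + l) := by
  rw [mem_simplex] at *
  simp only [Prod.fst_add, Prod.snd_add]
  omega

lemma sum_simplex (n : ℕ) (F : ℕ × ℕ × ℕ → ℝ) :
    ∑ r ∈ simplex n, F r = ∑ i ∈ range (n + 1), ∑ j ∈ range (n + 1 - i), F (i, j, n - i - j) := by
  rw [sum_sigma']
  refine sum_nbij' (fun r => ⟨r.1, r.2.1⟩) (fun x => (x.1, x.2, n - x.1 - x.2)) ?_ ?_ ?_ ?_ ?_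
  · rintro ⟨i, j, k⟩ h
    simp only [mem_simplex, mem_sigma, mem_range] at h ⊢
    omega
  · rintro ⟨i, j⟩ h
    simp only [mem_simplex, mem_sigma, mem_range] at h ⊢
    omega
  · rintro ⟨i, j, k⟩ h
    simp only [mem_simplex] at h
    simp only [Prod.mk.injEq, true_and]
    omega
  · rintro ⟨i, j⟩ _
    rfl
  · rintro ⟨i, j, k⟩ h
    simp only [mem_simplex] at h
    simp only
    congr
    omega

lemma baryMonomial_zero : baryMonomial 0 = 1 := by
  ext u v
  simp [baryMonomial]

lemma baryMonomial_mul (r s : ℕ × ℕ × ℕ) :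
    baryMonomial r * baryMonomial s = baryMonomial (r + s) := by
  ext u v
  simp only [Pi.mul_apply, baryMonomial, Prod.fst_add, Prod.snd_add]
  ring

lemma trinomialCoeff_pos (n : ℕ) (r : ℕ × ℕ × ℕ) : 0 < trinomialCoeff n r := by
  unfold trinomialCoeff
  positivity

lemma triBern_eq_trinomialCoeff_mul (n : ℕ) (r : ℕ × ℕ × ℕ) (u v : ℝ) :
    triBern n r.1 r.2.1 r.2.2 u v = trinomialCoeff n r * baryMonomial r u v := by
  rw [triBern, trinomialCoeff, baryMonomial]
  ring

lemma triBern_nonneg (n : ℕ) (r : ℕ × ℕ × ℕ) {u v : ℝ} (hu : 0 ≤ u) (hv : 0 ≤ v)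
    (huv : u + v ≤ 1) : 0 ≤ triBern n r.1 r.2.1 r.2.2 u v := by
  have : 0 ≤ 1 - u - v := by linarith
  unfold triBern
  positivity

lemma baryMonomial_mem_bernsteinCone {n : ℕ} {r : ℕ × ℕ × ℕ} (hr : r ∈ simplex n) :
    baryMonomial r ∈ bernsteinCone n :=
  Submodule.subset_span ⟨r, hr, rfl⟩

lemma bernsteinCone_mul_le (m l : ℕ) :
    bernsteinCone m * bernsteinCone l ≤ bernsteinCone (m + l) := by
  rw [bernsteinCone, bernsteinCone, Submodule.span_mul_span]
  apply Submodule.span_mono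
  rintro _ ⟨_, ⟨r, hr, rfl⟩, _, ⟨s, hs, rfl⟩, rfl⟩
  exact ⟨r + s, add_mem_simplex hr hs, (baryMonomial_mul r s).symm⟩

lemma prod_mem_bernsteinCone {ι : Type*} (s : Finset ι) (m : ι → ℕ) (f : ι → ℝ → ℝ → ℝ)
    (h : ∀ i ∈ s, f i ∈ bernsteinCone (m i)) : ∏ i ∈ s, f i ∈ bernsteinCone (∑ i ∈ s, m i) := by
  classical
  induction s using Finset.induction_on with
  | empty =>
    rw [prod_empty, sum_empty, ← baryMonomial_zero]
    exact baryMonomial_mem_bernsteinCone (by simp [mem_simplex])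
  | insert i s hi ih =>
    rw [prod_insert hi, sum_insert hi]
    exact bernsteinCone_mul_le _ _ (Submodule.mul_mem_mul (h i (mem_insert_self i s))
      (ih fun j hj => h j (mem_insert_of_mem hj)))

lemma affine_mem_bernsteinCone {a b c : ℝ} (ha : 0 ≤ a) (hb : 0 ≤ b) (hc : 0 ≤ c) :
    (fun u v : ℝ => a * u + b * v + c * (1 - u - v)) ∈ bernsteinCone 1 := by
  have h : (fun u v : ℝ => a * u + b * v + c * (1 - u - v)) =
      a.toNNReal • baryMonomial (1, 0, 0) + b.toNNReal • baryMonomial (0, 1, 0) +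
        c.toNNReal • baryMonomial (0, 0, 1) := by
    ext u v
    simp [baryMonomial, NNReal.smul_def, ha, hb, hc]
  rw [h]
  refine add_mem (add_mem ?_ ?_) ?_ <;>
    exact Submodule.smul_mem _ _ (baryMonomial_mem_bernsteinCone (by simp [mem_simplex]))

lemma exists_eq_sum_triBern_of_mem_bernsteinCone {n : ℕ} {f : ℝ → ℝ → ℝ}
    (hf : f ∈ bernsteinCone n) : ∃ e : ℕ × ℕ × ℕ → ℝ, (∀ r ∈ simplex n, 0 ≤ e r) ∧
      ∀ u v, f u v = ∑ r ∈ simplex n, e r * triBern n r.1 r.2.1 r.2.2 u v := by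
  obtain ⟨c, rfl⟩ := (Fintype.mem_span_image_iff_exists_fun ℝ≥0).mp hf
  refine ⟨fun r => if h : r ∈ simplex n then c ⟨r, h⟩ / trinomialCoeff n r else 0,
    fun r hr => ?_, fun u v => ?_⟩
  · simp only [dif_pos hr]
    exact div_nonneg (c _).2 (trinomialCoeff_pos n r).le
  · rw [← sum_coe_sort (simplex n)]
    simp only [Finset.sum_apply, Pi.smul_apply, NNReal.smul_def, smul_eq_mul]
    refine Fintype.sum_congr _ _ fun r => ?_
    rw [dif_pos (mem_coe.1 r.2), triBern_eq_trinomialCoeff_mul, ← mul_assoc,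
      div_mul_cancel₀ _ (trinomialCoeff_pos n r).ne']

lemma qFact_nonneg {q : ℝ} (hq : 0 ≤ q) (r : ℕ) : 0 ≤ qFact q r := by
  induction r with
  | zero => exact zero_le_one
  | succ r ih => exact mul_nonneg (sum_nonneg fun s _ => pow_nonneg hq s) ih

lemma qBinom_nonneg {q : ℝ} (hq : 0 ≤ q) (i j : ℕ) : 0 ≤ qBinom q i j := by
  unfold qBinom
  split_ifs
  · have := qFact_nonneg hq i; have := qFact_nonneg hq j; have := qFact_nonneg hq (i - j)
    positivity
  · exact le_rfl

lemma triB_mem_bernsteinCone {q : ℝ} (hq0 : 0 ≤ q) (hq1 : q ≤ 1) {n i j k : ℕ}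
    (h : i + j + k = n) : triB q n i j k ∈ bernsteinCone n := by
  have hfactor (s : ℕ) : (fun u v : ℝ => 1 - q ^ s * u - q ^ s * v) ∈ bernsteinCone 1 := by
    have hqs : 0 ≤ 1 - q ^ s := sub_nonneg.2 (pow_le_one₀ hq0 hq1)
    convert affine_mem_bernsteinCone hqs hqs zero_le_one using 3
    ring
  have hprod := prod_mem_bernsteinCone (range k) (fun _ => 1) _ fun s _ => hfactor s
  simp only [sum_const, card_range, smul_eq_mul, mul_one] at hprod
  have hmono : baryMonomial (i, j, 0) ∈ bernsteinCone (i + j) :=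
    baryMonomial_mem_bernsteinCone (by simp [mem_simplex])
  have hcoef : 0 ≤ qBinom q n k * (Nat.choose (i + j) i : ℝ) :=
    mul_nonneg (qBinom_nonneg hq0 n k) (Nat.cast_nonneg _)
  have htriB : triB q n i j k = (qBinom q n k * (Nat.choose (i + j) i : ℝ)).toNNReal •
      (baryMonomial (i, j, 0) * ∏ s ∈ range k, fun u v => 1 - q ^ s * u - q ^ s * v) := by
    ext u v
    simp [triB, baryMonomial, prod_apply, NNReal.smul_def, hcoef]
    ring
  rw [htriB, ← h]
  exact Submodule.smul_mem _ _ (bernsteinCone_mul_le _ _ (Submodule.mul_mem_mul hmono hprod))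

lemma eq_zero_of_sum_mul_pow_eq_zero_of_pos {N : ℕ} {a : ℕ → ℝ}
    (h : ∀ x : ℝ, 0 < x → ∑ i ∈ range N, a i * x ^ i = 0) : ∀ i < N, a i = 0 := by
  set p : Polynomial ℝ := ∑ i ∈ range N, Polynomial.C (a i) * Polynomial.X ^ i with hp
  have hp0 : p = 0 := by
    refine Polynomial.eq_zero_of_infinite_isRoot p ((Set.Ioi_infinite 0).mono fun x hx => ?_)
    simpa [hp, Polynomial.eval_finsetSum] using h x hx
  intro i hi
  simpa [hp, Polynomial.finsetSum_coeff, Polynomial.coeff_C_mul_X_pow, hi] using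
    congrArg (Polynomial.coeff · i) hp0

lemma baryMonomial_div_one_add_add {n : ℕ} {r : ℕ × ℕ × ℕ} (hr : r ∈ simplex n) {x y : ℝ}
    (hs : 1 + x + y ≠ 0) :
    baryMonomial r (x / (1 + x + y)) (y / (1 + x + y)) = x ^ r.1 * y ^ r.2.1 / (1 + x + y) ^ n := by
  have hw : 1 - x / (1 + x + y) - y / (1 + x + y) = 1 / (1 + x + y) := by
    field_simp
    ring
  rw [baryMonomial, hw, ← mem_simplex.mp hr, pow_add, pow_add, div_pow, div_pow, div_pow, one_pow]
  field_simp

lemma eq_zero_of_sum_baryMonomial_eq_zero (n : ℕ) (e : ℕ × ℕ × ℕ → ℝ)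
    (h : ∀ u v, ∑ r ∈ simplex n, e r * baryMonomial r u v = 0) : ∀ r ∈ simplex n, e r = 0 := by
  -- Substituting `u = x / (1 + x + y)`, `v = y / (1 + x + y)` leaves a polynomial in `x, y > 0`.
  have hpoly : ∀ x y : ℝ, 0 < x → 0 < y →
      ∑ i ∈ range (n + 1), (∑ j ∈ range (n + 1 - i), e (i, j, n - i - j) * y ^ j) * x ^ i = 0 := by
    intro x y hx hy
    have hs : 1 + x + y ≠ 0 := by positivity
    have := h (x / (1 + x + y)) (y / (1 + x + y))
    rw [sum_congr rfl fun r hr => by rw [baryMonomial_div_one_add_add hr hs, mul_div_assoc'],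
      ← sum_div, div_eq_zero_iff, or_iff_left (pow_ne_zero n hs), sum_simplex] at this
    rw [← this]
    simp only [sum_mul]
    exact sum_congr rfl fun i _ => sum_congr rfl fun j _ => by ring
  rintro ⟨i, j, k⟩ hr
  simp only [mem_simplex] at hr
  obtain rfl : k = n - i - j := by omega
  refine eq_zero_of_sum_mul_pow_eq_zero_of_pos (N := n + 1 - i)
    (a := fun j => e (i, j, n - i - j)) (fun y hy => ?_) j (by omega)
  exact eq_zero_of_sum_mul_pow_eq_zero_of_pos (fun x hx => hpoly x y hx hy) i (by omega)

lemma eq_zero_of_sum_triBern_eq_zero (n : ℕ) (e : ℕ × ℕ × ℕ → ℝ)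
    (h : ∀ u v, ∑ r ∈ simplex n, e r * triBern n r.1 r.2.1 r.2.2 u v = 0) :
    ∀ r ∈ simplex n, e r = 0 := by
  intro r hr
  refine (mul_eq_zero.mp (eq_zero_of_sum_baryMonomial_eq_zero n (fun r => e r * trinomialCoeff n r)
    (fun u v => ?_) r hr)).resolve_right (trinomialCoeff_pos n r).ne'
  rw [← h u v]
  exact sum_congr rfl fun r _ => by rw [triBern_eq_trinomialCoeff_mul, mul_assoc]

section ChangeOfBasis

variable {ι κ : Type*} {s : Finset ι} {t : Finset κ}

lemma sum_mul_sum_eq_sum_sum_mul (c : ι → ℝ) (a : ι → κ → ℝ) (b : κ → ℝ) :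
    ∑ p ∈ s, c p * ∑ r ∈ t, a p r * b r = ∑ r ∈ t, (∑ p ∈ s, c p * a p r) * b r := by
  simp only [mul_sum, sum_mul, mul_assoc]
  exact sum_comm

lemma coeff_eq_sum_of_change_of_basis {X : Type*} {B : ι → X → ℝ} {b : κ → X → ℝ}
    {a : ι → κ → ℝ} {c : ι → ℝ} {d : κ → ℝ}
    (hb : ∀ e : κ → ℝ, (∀ x, ∑ r ∈ t, e r * b r x = 0) → ∀ r ∈ t, e r = 0)
    (hB : ∀ p ∈ s, ∀ x, B p x = ∑ r ∈ t, a p r * b r x)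
    (hrep : ∀ x, ∑ p ∈ s, c p * B p x = ∑ r ∈ t, d r * b r x) :
    ∀ r ∈ t, d r = ∑ p ∈ s, c p * a p r := by
  intro r hr
  refine sub_eq_zero.mp (hb (fun r => d r - ∑ p ∈ s, c p * a p r) (fun x => ?_) r hr)
  simp only [sub_mul, sum_sub_distrib, ← hrep x, ← sum_mul_sum_eq_sum_sum_mul]
  rw [sum_congr rfl fun p hp => by rw [hB p hp x], sub_self]

lemma sum_abs_mul_le_of_change_of_basis {B : ι → ℝ} {b : κ → ℝ} {a : ι → κ → ℝ}
    {c : ι → ℝ} {d : κ → ℝ} (ha : ∀ p ∈ s, ∀ r ∈ t, 0 ≤ a p r)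
    (hB : ∀ p ∈ s, B p = ∑ r ∈ t, a p r * b r) (hd : ∀ r ∈ t, d r = ∑ p ∈ s, c p * a p r)
    (hb : ∀ r ∈ t, 0 ≤ b r) :
    ∑ r ∈ t, |d r| * b r ≤ ∑ p ∈ s, |c p| * B p :=
  calc ∑ r ∈ t, |d r| * b r ≤ ∑ r ∈ t, (∑ p ∈ s, |c p| * a p r) * b r := by
        refine sum_le_sum fun r hr => mul_le_mul_of_nonneg_right ?_ (hb r hr)
        rw [hd r hr]
        refine (abs_sum_le_sum_abs _ _).trans_eq (sum_congr rfl fun p hp => ?_)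
        rw [abs_mul, abs_of_nonneg (ha p hp r hr)]
    _ = ∑ p ∈ s, |c p| * B p := by
        rw [← sum_mul_sum_eq_sum_sum_mul]
        exact sum_congr rfl fun p hp => by rw [hB p hp]

end ChangeOfBasis

/-- the classical triangular Bernstein basis is better conditioned than the
    triangular q-Bernstein basis. -/
theorem stmt11 (q : ℝ) (hq0 : 0 < q) (hq1 : q < 1) (n : ℕ)
    (c d : ℕ × ℕ × ℕ → ℝ)
    (hrep : ∀ u v : ℝ,
      ∑ p ∈ simplex n, c p * triB q n p.1 p.2.1 p.2.2 u v =
        ∑ p ∈ simplex n, d p * triBern n p.1 p.2.1 p.2.2 u v)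
    (u v : ℝ) (hu : 0 ≤ u) (hv : 0 ≤ v) (huv : u + v ≤ 1) :
    ∑ p ∈ simplex n, |d p| * triBern n p.1 p.2.1 p.2.2 u v ≤
      ∑ p ∈ simplex n, |c p| * triB q n p.1 p.2.1 p.2.2 u v := by
  have hcone : ∀ p ∈ simplex n, ∃ e : ℕ × ℕ × ℕ → ℝ, (∀ r ∈ simplex n, 0 ≤ e r) ∧
      ∀ u v, triB q n p.1 p.2.1 p.2.2 u v = ∑ r ∈ simplex n, e r * triBern n r.1 r.2.1 r.2.2 u v :=
    fun p hp => exists_eq_sum_triBern_of_mem_bernsteinCone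
      (triB_mem_bernsteinCone hq0.le hq1.le (mem_simplex.mp hp))
  choose! a ha_nonneg ha_eq using hcone
  have hd : ∀ r ∈ simplex n, d r = ∑ p ∈ simplex n, c p * a p r :=
    coeff_eq_sum_of_change_of_basis (s := simplex n) (t := simplex n)
      (fun e he => eq_zero_of_sum_triBern_eq_zero n e fun u v => he (u, v))
      (fun p hp (x : ℝ × ℝ) => ha_eq p hp x.1 x.2) (fun x => hrep x.1 x.2)
  exact sum_abs_mul_le_of_change_of_basis (s := simplex n) (t := simplex n) ha_nonneg
    (fun p hp => ha_eq p hp u v) hd fun r _ => triBern_nonneg n r hu hv huv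
end
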